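/- arXiv:2106.06079 — 2 statements merged into one kernel-verified Lean document; each statement's English description precedes it below -/
import Mathlib

section
/- For a finite-horizon deterministic MDP with horizon h, reward function R, and a sequentially consistent base policy π̃ (one that, restarted from any intermediate state of a trajectory it generates, reproduces the remainder of that trajectory), the rollout policy π_roll defined by greedily choosing at each step the action maximizing the one-step reward plus the value of following π̃ thereafter satisfies V_h^{π_roll}(s₀) ≥ V_h^{π̃}(s₀) for every starting state s₀. -/
/-- Value of running a stationary (hence sequentially consistent) base policy `πb`
for `h` steps in a deterministic MDP with transition `T` and reward `R`. -/
def baseValue {S A : Type*} (T : S → A → S) (R : S → A → S → ℝ) (πb : S → A) :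
    ℕ → S → ℝ
  | 0, _ => 0
  | h + 1, s => R s (πb s) (T s (πb s)) + baseValue T R πb h (T s (πb s))

/-- Value of running the rollout policy `g` (indexed by remaining horizon) for `h`
steps in a deterministic MDP. -/
def rolloutValue {S A : Type*} (T : S → A → S) (R : S → A → S → ℝ) (g : ℕ → S → A) :
    ℕ → S → ℝ
  | 0, _ => 0
  | h + 1, s => R s (g h s) (T s (g h s)) + rolloutValue T R g h (T s (g h s))

/-- Rollout improvement for a deterministic finite-horizon MDP: if at each step the
rollout policy `g` chooses an action maximizing the one-step reward plus the value of
following the (sequentially consistent, stationary) base policy `πb` thereafter, then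
the rollout value dominates the base-policy value from every starting state. -/
theorem stmt_0 {S A : Type*} (T : S → A → S) (R : S → A → S → ℝ)
    (πb : S → A) (g : ℕ → S → A)
    (hg : ∀ n s a, R s a (T s a) + baseValue T R πb n (T s a) ≤
      R s (g n s) (T s (g n s)) + baseValue T R πb n (T s (g n s))) :
    ∀ h s₀, baseValue T R πb h s₀ ≤ rolloutValue T R g h s₀ := by
  intro h
  induction h with
  | zero => exact fun _ => le_rfl
  | succ n ih =>
    intro s₀
    -- The base policy's own first action is one of the candidates the greedy step beats.
    calc baseValue T R πb (n + 1) s₀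
        ≤ R s₀ (g n s₀) (T s₀ (g n s₀)) + baseValue T R πb n (T s₀ (g n s₀)) :=
          hg n s₀ (πb s₀)
      _ ≤ rolloutValue T R g (n + 1) s₀ := add_le_add_right (ih _) _
end

section
/- Expected improvement is monotone increasing in the standard deviation: for fixed μ and threshold y*, the function σ ↦ (y* − μ)Φ((y* − μ)/σ) + σφ((y* − μ)/σ) on σ > 0 is increasing, with derivative φ((y* − μ)/σ) > 0. -/
/-- The standard normal density `φ`. -/
noncomputable def stdNormalPDF (z : ℝ) : ℝ := (Real.sqrt (2 * Real.pi))⁻¹ * Real.exp (-z ^ 2 / 2)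

/-- The standard normal CDF `Φ`. -/
noncomputable def stdNormalCDF (z : ℝ) : ℝ := ∫ t in Set.Iic z, stdNormalPDF t

/-!
Write `a = y* − μ` and `z = a / σ`. Since `Φ' = φ` and `φ'(z) = −z φ(z)`, differentiating
`a Φ(a/σ) + σ φ(a/σ)` in `σ` gives `φ(z) + (a φ(z) − σ z φ(z)) · (−a/σ²)`, and the bracket
vanishes because `σ z = a`. The derivative `φ(z)` is positive, so the function is strictly
increasing on `σ > 0`.
-/

open MeasureTheory Set

theorem hasDerivAt_integral_Iic {E : Type*} [NormedAddCommGroup E] [NormedSpace ℝ E]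
    [CompleteSpace E] {f : ℝ → E} (hf : Integrable f) (hc : Continuous f) (x : ℝ) :
    HasDerivAt (fun y => ∫ t in Iic y, f t) (f x) x := by
  have hsplit : ∀ y, ∫ t in Iic y, f t = (∫ t in Iic 0, f t) + ∫ t in (0 : ℝ)..y, f t :=
    fun y => by
      rw [← sub_eq_iff_eq_add',
        intervalIntegral.integral_Iic_sub_Iic hf.integrableOn hf.integrableOn]
  exact ((intervalIntegral.integral_hasDerivAt_right hf.intervalIntegrable
    (hc.stronglyMeasurableAtFilter _ _) hc.continuousAt).const_add _).congr_of_eventuallyEq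
      (.of_forall hsplit)

theorem stdNormalPDF_pos (z : ℝ) : 0 < stdNormalPDF z := by
  unfold stdNormalPDF
  positivity

theorem continuous_stdNormalPDF : Continuous stdNormalPDF := by
  unfold stdNormalPDF
  fun_prop

theorem integrable_stdNormalPDF : Integrable stdNormalPDF := by
  have h : stdNormalPDF =
      fun z => (Real.sqrt (2 * Real.pi))⁻¹ * Real.exp (-(1 / 2) * z ^ 2) := by
    funext z
    unfold stdNormalPDF
    ring_nf
  rw [h]
  exact (integrable_exp_neg_mul_sq (by norm_num)).const_mul _

theorem hasDerivAt_stdNormalCDF (z : ℝ) : HasDerivAt stdNormalCDF (stdNormalPDF z) z :=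
  hasDerivAt_integral_Iic integrable_stdNormalPDF continuous_stdNormalPDF z

theorem hasDerivAt_stdNormalPDF (z : ℝ) : HasDerivAt stdNormalPDF (-z * stdNormalPDF z) z := by
  have hexp : HasDerivAt (fun z : ℝ => -z ^ 2 / 2) (-z) z := by
    refine ((hasDerivAt_pow 2 z).neg.div_const 2).congr_deriv ?_
    push_cast
    ring
  unfold stdNormalPDF
  refine (((Real.hasDerivAt_exp _).comp z hexp).const_mul
    (Real.sqrt (2 * Real.pi))⁻¹).congr_deriv ?_
  ring

/-- `EI(μ, σ; y*)` written in terms of `a = y* − μ`. -/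
noncomputable def expectedImprovement (a σ : ℝ) : ℝ :=
  a * stdNormalCDF (a / σ) + σ * stdNormalPDF (a / σ)

theorem hasDerivAt_expectedImprovement (a : ℝ) {σ : ℝ} (hσ : σ ≠ 0) :
    HasDerivAt (expectedImprovement a) (stdNormalPDF (a / σ)) σ := by
  have hz : HasDerivAt (fun σ : ℝ => a / σ) (-a / σ ^ 2) σ := by
    refine ((hasDerivAt_inv hσ).const_mul a).congr_deriv ?_
    field_simp
  have hΦ := (hasDerivAt_stdNormalCDF (a / σ)).comp σ hz
  have hφ := (hasDerivAt_stdNormalPDF (a / σ)).comp σ hz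
  refine ((hΦ.const_mul a).add ((hasDerivAt_id σ).mul hφ)).congr_deriv ?_
  simp only [id, Function.comp_apply]
  field_simp
  ring

theorem strictMonoOn_expectedImprovement (a : ℝ) :
    StrictMonoOn (expectedImprovement a) (Ioi 0) :=
  strictMonoOn_of_hasDerivWithinAt_pos (convex_Ioi 0)
    (fun _ hσ => (hasDerivAt_expectedImprovement a (ne_of_gt hσ)).continuousAt.continuousWithinAt)
    (fun _ hσ =>
      (hasDerivAt_expectedImprovement a (ne_of_gt (interior_subset hσ))).hasDerivWithinAt)
    (fun _ _ => stdNormalPDF_pos _)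

/-- Expected improvement is increasing in the standard deviation: for fixed `μ` and
threshold `y*`, `σ ↦ (y* − μ)Φ((y* − μ)/σ) + σφ((y* − μ)/σ)` is strictly increasing on
`σ > 0`, with derivative `φ((y* − μ)/σ) > 0` at every `σ > 0`. -/
theorem stmt_6 (μ ystar : ℝ) :
    StrictMonoOn (fun σ : ℝ =>
        (ystar - μ) * stdNormalCDF ((ystar - μ) / σ) + σ * stdNormalPDF ((ystar - μ) / σ))
      (Set.Ioi 0) ∧
      ∀ σ : ℝ, 0 < σ →
        HasDerivAt (fun σ : ℝ =>
            (ystar - μ) * stdNormalCDF ((ystar - μ) / σ) + σ * stdNormalPDF ((ystar - μ) / σ))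
          (stdNormalPDF ((ystar - μ) / σ)) σ ∧
        0 < stdNormalPDF ((ystar - μ) / σ) :=
  ⟨strictMonoOn_expectedImprovement (ystar - μ),
    fun _ hσ => ⟨hasDerivAt_expectedImprovement (ystar - μ) (ne_of_gt hσ), stdNormalPDF_pos _⟩⟩
end
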